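/- arXiv:2208.01442 — 7 statements merged into one kernel-verified Lean document; each statement's English description precedes it below -/
import Mathlib

section
/- A matrix M ∈ F^{m×n} has rank at most r if and only if there exists a matrix C ∈ F^{r×(n-r)} and a permutation σ of the columns of M such that M·σ·(I_{n-r} ; C)ᵀ = 0; in particular, if the last r columns of M span the column space of M, then there exists C ∈ F^{r×(n-r)} with M·(I_{n-r}; C stacked) = 0, i.e. for each j ≤ n-r, the j-th column of M equals minus the combination of the last r columns with coefficients given by the j-th column of C. -/
/-! `M * fromRows 1 C = 0` says exactly that column `inl j` of `M` equals
`-∑ₖ C k j • (column inr k)`, so such a `C` exists iff the `inr` columns span the column space.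
For the rank statement, a linearly independent spanning family of columns has `rank M ≤ r`
members, and a permutation of the columns moves it into the `inr` block. -/

open Matrix Module Submodule

namespace Matrix

variable {m α β R : Type*} [Fintype α] [Fintype β] [DecidableEq α] [CommRing R]

theorem col_mul_fromRows_one (N : Matrix m (α ⊕ β) R) (C : Matrix β α R) (j : α) :
    (N * fromRows (1 : Matrix α α R) C).col j =
      N.col (.inl j) + ∑ k, C k j • N.col (.inr k) := by
  ext i
  rw [col_apply, mul_apply, Fintype.sum_sum_type]
  simp [one_apply, mul_comm]

theorem exists_mul_fromRows_one_eq_zero_iff (N : Matrix m (α ⊕ β) R) :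
    (∃ C : Matrix β α R, N * fromRows (1 : Matrix α α R) C = 0) ↔
      span R (Set.range N.col) ≤ span R (Set.range fun k => N.col (.inr k)) := by
  constructor
  · rintro ⟨C, hC⟩
    rw [span_le]
    rintro _ ⟨j | k, rfl⟩
    · refine (mem_span_range_iff_exists_fun R).mpr ⟨fun k => -C k j, ?_⟩
      have hj := col_mul_fromRows_one N C j
      rw [hC] at hj
      simp only [neg_smul, Finset.sum_neg_distrib]
      exact neg_eq_of_add_eq_zero_left hj.symm
    · exact subset_span ⟨k, rfl⟩
  · intro h
    choose c hc using fun j =>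
      (mem_span_range_iff_exists_fun R).mp (h (subset_span ⟨.inl j, rfl⟩))
    refine ⟨of fun k j => -c j k, ext_col fun j => ?_⟩
    rw [col_mul_fromRows_one]
    exact add_eq_zero_iff_eq_neg'.mpr (by simp [neg_smul, hc])

end Matrix

theorem finrank_span_range_le_card_iff_exists_perm {K V α β : Type*} [Field K] [AddCommGroup V]
    [Module K V] [Finite α] [Fintype β] (v : α ⊕ β → V) :
    finrank K (span K (Set.range v)) ≤ Fintype.card β ↔
      ∃ σ : Equiv.Perm (α ⊕ β),
        span K (Set.range v) ≤ span K (Set.range fun k => v (σ (.inr k))) := by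
  constructor
  · intro hv
    obtain ⟨κ, a, ha, hspan, hli⟩ := exists_linearIndependent' K v
    have : Finite κ := Finite.of_injective a ha
    have : Fintype κ := Fintype.ofFinite κ
    have hκ : Fintype.card κ ≤ Fintype.card β := by
      rwa [← finrank_span_eq_card hli, hspan]
    obtain ⟨g⟩ := Function.Embedding.nonempty_of_card_le hκ
    obtain ⟨σ, hσ⟩ := Equiv.Perm.exists_extending_pair (Sum.inr ∘ g) a
      (Sum.inr_injective.comp g.injective) ha
    refine ⟨σ, hspan ▸ span_mono ?_⟩
    rintro _ ⟨k, rfl⟩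
    exact ⟨g k, by simp [← hσ]⟩
  · rintro ⟨σ, hσ⟩
    have := Module.Finite.span_of_finite K (Set.finite_range fun k => v (σ (.inr k)))
    exact (finrank_mono hσ).trans (finrank_range_le_card _)

/-- A matrix `M : m × (s ⊕ r)` (so `n = s + r` columns, `s = n - r`) has rank at most `r`
iff after a permutation of its columns there is `C : r × s` with
`M·σ·(I_s ; C) = 0`; in particular if the last `r` columns span the column space then
there is `C` with `M·(I_s ; C) = 0`. -/
theorem statement3 {F : Type*} [Field F] (m s r : ℕ)
    (M : Matrix (Fin m) (Fin s ⊕ Fin r) F) :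
    (M.rank ≤ r ↔ ∃ (σ : Equiv.Perm (Fin s ⊕ Fin r)) (C : Matrix (Fin r) (Fin s) F),
        M.submatrix id σ * Matrix.fromRows (1 : Matrix (Fin s) (Fin s) F) C = 0) ∧
    ((Submodule.span F (Set.range fun j : Fin s ⊕ Fin r => (fun i => M i j)) ≤
        Submodule.span F (Set.range fun j : Fin r => (fun i => M i (Sum.inr j)))) →
      ∃ C : Matrix (Fin r) (Fin s) F, M * Matrix.fromRows (1 : Matrix (Fin s) (Fin s) F) C = 0) := by
  refine ⟨?_, (exists_mul_fromRows_one_eq_zero_iff M).mpr⟩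
  have hperm := finrank_span_range_le_card_iff_exists_perm (K := F) M.col
  rw [Fintype.card_fin] at hperm
  rw [rank_eq_finrank_span_cols, hperm]
  refine exists_congr fun σ => ?_
  have hcols : Set.range (M.submatrix id σ).col = Set.range M.col :=
    σ.surjective.range_comp M.col
  rw [exists_mul_fromRows_one_eq_zero_iff, hcols]
  rfl
end

section
/- Let M ∈ F^{m×n} and C ∈ F^{r×(n-r)} satisfy the Kipnis–Shamir equation M·(I_{n-r}; C) = 0. Then for every row r_ℓ of M and every subset T ⊆ {1,...,n} of size r+1, the (r+1)×(r+1) determinant of the matrix obtained by stacking r_ℓ on top of the r×n matrix (−C | I_r), restricted to columns in T, is zero. -/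
/-!
The Kipnis–Shamir equation says `M_L + M_R C = 0`, where `M_L`, `M_R` are the first `n - r` and
the last `r` columns of `M`; hence `M = M_R (−C | I_r)`. So every row of `M` is a combination of
the rows of `(−C | I_r)`, and each `(r+1)×(r+1)` minor of the stacked matrix is the determinant of
a product through an `r`-dimensional space.
-/

open Matrix

theorem Matrix.eq_toCols₂_mul_fromCols_of_mul_fromRows_eq_zero {R m s r : Type*} [Ring R]
    [Fintype s] [Fintype r] [DecidableEq s] [DecidableEq r]
    {M : Matrix m (s ⊕ r) R} {C : Matrix r s R} (h : M * fromRows (1 : Matrix s s R) C = 0) :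
    M = M.toCols₂ * fromCols (-C) 1 := by
  rw [← fromCols_toCols M, fromCols_mul_fromRows, Matrix.mul_one] at h
  rw [mul_fromCols, Matrix.mul_neg, Matrix.mul_one, ← eq_neg_of_add_eq_zero_left h,
    fromCols_toCols]

theorem Matrix.det_mul_eq_zero_of_card_lt {F n k : Type*} [Field F] [Fintype n] [DecidableEq n]
    [Fintype k] (L : Matrix n k F) (N : Matrix k n F) (hcard : Fintype.card k < Fintype.card n) :
    (L * N).det = 0 := by
  by_contra hdet
  have hrank := rank_of_isUnit (L * N) ((isUnit_iff_isUnit_det _).2 (isUnit_iff_ne_zero.2 hdet))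
  have hwidth := (rank_mul_le_left L N).trans (rank_le_card_width L)
  omega

theorem Matrix.det_of_cases_vecMul_eq_zero {F n : Type*} [Field F] {r : ℕ}
    (x : Fin r → F) (N : Matrix (Fin r) n F) (t : Fin (r + 1) → n) :
    (of fun u j => Fin.cases ((x ᵥ* N) (t j)) (fun u' => N u' (t j)) u :
      Matrix (Fin (r + 1)) (Fin (r + 1)) F).det = 0 := by
  have hfactor : (of fun u j => Fin.cases ((x ᵥ* N) (t j)) (fun u' => N u' (t j)) u :
      Matrix (Fin (r + 1)) (Fin (r + 1)) F) =
        of (vecCons x (1 : Matrix (Fin r) (Fin r) F)) * N.submatrix id t := by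
    ext u j
    refine Fin.cases rfl (fun u' => ?_) u
    exact (congr_fun (congr_fun (Matrix.one_mul (N.submatrix id t)) u') j).symm
  rw [hfactor]
  exact det_mul_eq_zero_of_card_lt _ _ (by simp)

/-- Kipnis–Shamir implies Support Minors: if `M·(I_s ; C) = 0`, then for every row `ℓ`
of `M` and every choice `t` of `r+1` distinct columns, the `(r+1)×(r+1)` minor of the
matrix obtained by stacking the row `M_ℓ` on top of `(−C | I_r)`, restricted to the
columns `t`, vanishes. -/
theorem statement5 {F : Type*} [Field F] (m s r : ℕ)
    (M : Matrix (Fin m) (Fin s ⊕ Fin r) F) (C : Matrix (Fin r) (Fin s) F)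
    (h : M * Matrix.fromRows (1 : Matrix (Fin s) (Fin s) F) C = 0) :
    ∀ (ℓ : Fin m) (t : Fin (r + 1) → Fin s ⊕ Fin r), Function.Injective t →
      (Matrix.of (fun (u j : Fin (r + 1)) =>
          (Fin.cases (M ℓ (t j))
            (fun u' => Matrix.fromCols (-C) (1 : Matrix (Fin r) (Fin r) F) u' (t j))
            u : F)) : Matrix (Fin (r + 1)) (Fin (r + 1)) F).det = 0 := by
  intro ℓ t _
  have hrow : M ℓ = M.toCols₂ ℓ ᵥ* fromCols (-C) 1 :=
    congr_fun (eq_toCols₂_mul_fromCols_of_mul_fromRows_eq_zero h) ℓ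
  rw [hrow]
  exact det_of_cases_vecMul_eq_zero _ _ t
end

section
/- Conversely, let M ∈ F^{m×n} and C ∈ F^{r×(n-r)}. If for every row r_ℓ of M and every subset T ⊆ {1,...,n} of size r+1 the maximal minor |(r_ℓ; −C I_r)|_{*,T} vanishes, then M·(I_{n-r}; C) = 0. Hence the Support Minors-C system and the Kipnis–Shamir system have the same solution set. -/
/-!
For a column `k` of the first block, take `T` to be `k` together with the `r` columns of the
identity block. The Schur complement of that identity block turns the minor of `(v ; −C | I_r)`
on `T` into `v k + ∑ᵤ v (s + u) C u k`, the `k`-th entry of `v · (I_s ; C)`; so the vanishing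
of these minors for `v = M_ℓ` is already the vanishing of `M · (I_s ; C)`.
-/

open Matrix

section

variable {R : Type*} [CommRing R] {s r : ℕ}

/-- The paper's `(v ; −C | I_r)`. -/
def stackRow (v : Fin s ⊕ Fin r → R) (C : Matrix (Fin r) (Fin s) R) :
    Matrix (Fin (r + 1)) (Fin s ⊕ Fin r) R :=
  of fun u j => Fin.cases (v j) (fun u' => fromCols (-C) 1 u' j) u

def pivotColumns (k : Fin s) : Fin (r + 1) → Fin s ⊕ Fin r :=
  Fin.cons (Sum.inl k) Sum.inr

theorem pivotColumns_injective (k : Fin s) : Function.Injective (pivotColumns (r := r) k) :=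
  Fin.cons_injective_iff.2 ⟨by simp, Sum.inr_injective⟩

theorem det_stackRow_submatrix_pivotColumns (v : Fin s ⊕ Fin r → R)
    (C : Matrix (Fin r) (Fin s) R) (k : Fin s) :
    ((stackRow v C).submatrix id (pivotColumns k)).det = (v ᵥ* fromRows 1 C) k := by
  let e : Fin r ⊕ Unit ≃ Fin (r + 1) :=
    (Equiv.optionEquivSumPUnit (Fin r)).symm.trans (finSuccEquiv r).symm
  have hblocks : (stackRow v C).submatrix e (pivotColumns k ∘ e) =
      fromBlocks 1 (of fun i _ => -C i k) (of fun _ j => v (Sum.inr j))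
        (of fun _ _ => v (Sum.inl k)) := by
    ext (i | i) (j | j) <;> simp [e, stackRow, pivotColumns]
  rw [← det_submatrix_equiv_self e, submatrix_submatrix, Function.id_comp, hblocks,
    det_fromBlocks_one₁₁, det_unique]
  simp [vecMul, dotProduct, mul_apply, one_apply]

end

/-- Support Minors implies Kipnis–Shamir: if for every row `ℓ` of `M` and every choice
of `r+1` distinct columns the corresponding maximal minor of the matrix obtained by
stacking `M_ℓ` on top of `(−C | I_r)` vanishes, then `M·(I_s ; C) = 0`.  Hence the
Support Minors-C system and the Kipnis–Shamir system have the same solution set. -/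
theorem statement6 {F : Type*} [Field F] (m s r : ℕ)
    (M : Matrix (Fin m) (Fin s ⊕ Fin r) F) (C : Matrix (Fin r) (Fin s) F)
    (h : ∀ (ℓ : Fin m) (t : Fin (r + 1) → Fin s ⊕ Fin r), Function.Injective t →
      (Matrix.of (fun (u j : Fin (r + 1)) =>
          (Fin.cases (M ℓ (t j))
            (fun u' => Matrix.fromCols (-C) (1 : Matrix (Fin r) (Fin r) F) u' (t j))
            u : F)) : Matrix (Fin (r + 1)) (Fin (r + 1)) F).det = 0) :
    M * Matrix.fromRows (1 : Matrix (Fin s) (Fin s) F) C = 0 := by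
  ext ℓ k
  have hminor : ((stackRow (M ℓ) C).submatrix id (pivotColumns k)).det = 0 :=
    h ℓ _ (pivotColumns_injective k)
  rwa [det_stackRow_submatrix_pivotColumns, ← mul_apply_eq_vecMul] at hminor
end

section
/- Let M ∈ F^{m×n} with rank exactly r and suppose its last r columns are linearly independent, so M·(I_{n-r}; C) = 0 for a (unique) C. Then for every J ⊆ {1,...,m} with #J = r+1 and every t ∈ {1,...,n-r}, the minor |M|_{J, {t} ∪ {n-r+1,...,n}} equals zero; i.e., the Minors-modeling equations follow from the Kipnis–Shamir equations. -/
open Matrix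

/-- The Minors-modeling equations follow from the Kipnis–Shamir equations: if `M` has
rank exactly `r`, its last `r` columns are linearly independent and `M·(I_s ; C) = 0`,
then for every choice `ρ` of `r+1` distinct rows and every `t` among the first `s`
columns, the minor of `M` with rows `ρ` and columns `{t} ∪ {last r columns}` is zero. -/
theorem statement7 {F : Type*} [Field F] (m s r : ℕ)
    (M : Matrix (Fin m) (Fin s ⊕ Fin r) F) (C : Matrix (Fin r) (Fin s) F)
    (hrank : M.rank = r)
    (hli : LinearIndependent F (fun j : Fin r => fun i => M i (Sum.inr j)))
    (hKS : M * Matrix.fromRows (1 : Matrix (Fin s) (Fin s) F) C = 0) :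
    ∀ (ρ : Fin (r + 1) → Fin m), Function.Injective ρ → ∀ t : Fin s,
      (M.submatrix ρ
        (Fin.cases (Sum.inl t) (fun k' => Sum.inr k') : Fin (r + 1) → Fin s ⊕ Fin r)).det
        = 0 := by
  intro ρ hρ t
  -- From the KS equations, column `inl t` is a linear combination of the `inr` columns.
  have hKS' : ∀ i, M i (Sum.inl t) = ∑ j, (-C j t) * M i (Sum.inr j) := by
    intro i
    have h := congrFun (congrFun hKS i) t
    simp only [Matrix.mul_apply, Fintype.sum_sum_type, Matrix.fromRows_apply_inl,
      Matrix.fromRows_apply_inr, Matrix.one_apply, mul_ite, mul_one, mul_zero,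
      Finset.sum_ite_eq', Finset.mem_univ, if_true, Matrix.zero_apply] at h
    have := eq_neg_of_add_eq_zero_left h
    rw [this]
    simp [Finset.mul_sum, Finset.sum_neg_distrib, mul_comm]
  set N : Matrix (Fin (r + 1)) (Fin (r + 1)) F :=
    M.submatrix ρ (Fin.cases (Sum.inl t) (fun k' => Sum.inr k')) with hN
  set c : Fin (r + 1) → F := Fin.cases 0 (fun j => -C j t) with hc
  have hcol : ∀ k, N k 0 = ∑ i, c i • N k i := by
    intro k
    rw [Fin.sum_univ_succ]
    simp [hN, hc, hKS' (ρ k)]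
  have hdet := Matrix.det_updateCol_sum N 0 c
  rw [show (fun k : Fin (r+1) => ∑ i, c i • N k i) = fun k => N k 0 from
      funext fun k => (hcol k).symm] at hdet
  simpa [hc] using hdet
end

section
/- A matrix M ∈ F^{m×n} whose last r columns are linearly independent has rank at most r if and only if all minors |M|_{J,T} vanish for J ⊆ {1,...,m} with #J = r+1 and T = {t} ∪ {n-r+1,...,n} with 1 ≤ t ≤ n-r. (It suffices to consider column sets containing the last r columns.) -/
/-!
A square submatrix with nonzero determinant has full rank, and its rank is at most that of `M`;
so `rank M ≤ r` kills every `(r+1)`-minor. Conversely, if some column `t` of the first block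
were outside the span of the last `r` columns, then together with them it would give `r + 1`
linearly independent columns; the rows of these span `F^{r+1}`, so some `r + 1` of them form an
invertible matrix, i.e. a nonvanishing minor of the prescribed shape. Hence all columns lie in
an `r`-dimensional span.
-/

open Matrix Submodule

namespace Matrix

variable {m n ι K R : Type*}

theorem det_submatrix_eq_zero_of_rank_lt [CommRing R] [IsDomain R] [Fintype n]
    [Fintype ι] [DecidableEq ι] (A : Matrix m n R) (ρ : ι → m) (σ : ι → n)
    (h : A.rank < Fintype.card ι) :
    (A.submatrix ρ σ).det = 0 := by
  by_contra hdet
  have := rank_of_det_ne_zero hdet ▸ A.rank_submatrix_le ρ σ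
  omega

theorem rank_le_card_of_col_mem_span [Field K] [Fintype n] (A : Matrix m n K) [Fintype ι]
    (v : ι → m → K) (h : ∀ j, A.col j ∈ span K (Set.range v)) :
    A.rank ≤ Fintype.card ι := by
  have := Module.Finite.span_of_finite K (Set.finite_range v)
  rw [rank_eq_finrank_span_cols]
  exact (finrank_mono (span_le.2 (Set.range_subset_iff.2 h))).trans (finrank_range_le_card v)

theorem span_row_eq_top_of_linearIndependent_col [Field K] [Fintype m] [Fintype n]
    (A : Matrix m n K) (hA : LinearIndependent K A.col) : span K (Set.range A.row) = ⊤ := by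
  apply eq_top_of_finrank_eq
  rw [← rank_eq_finrank_span_row, ← rank_transpose, hA.rank_matrix,
    Module.finrank_fintype_fun_eq_card]

theorem exists_det_submatrix_ne_zero_of_linearIndependent_col [Field K] [Fintype m] [Fintype n]
    [DecidableEq n] (A : Matrix m n K) (hA : LinearIndependent K A.col) :
    ∃ ρ : n → m, Function.Injective ρ ∧ (A.submatrix ρ id).det ≠ 0 := by
  obtain ⟨κ, a, ha, hspan, hli⟩ := exists_linearIndependent' K A.row
  have : Fintype κ := Fintype.ofInjective a ha
  have hcard : Fintype.card κ = Fintype.card n := by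
    rw [← finrank_span_eq_card hli, hspan, span_row_eq_top_of_linearIndependent_col A hA,
      finrank_top, Module.finrank_fintype_fun_eq_card]
  let e : n ≃ κ := Fintype.equivOfCardEq hcard.symm
  refine ⟨a ∘ e, ha.comp e.injective, ?_⟩
  have hrows : LinearIndependent K (A.submatrix (a ∘ e) id).row := hli.comp e e.injective
  exact ((isUnit_iff_isUnit_det _).1 (linearIndependent_rows_iff_isUnit.1 hrows)).ne_zero

theorem mem_span_of_det_submatrix_cons_eq_zero [Field K] [Fintype m] {r : ℕ} {u : m → K}
    {v : Fin r → m → K} (hv : LinearIndependent K v)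
    (h : ∀ ρ : Fin (r + 1) → m, Function.Injective ρ →
      ((of (Fin.cons u v : Fin (r + 1) → m → K))ᵀ.submatrix ρ id).det = 0) :
    u ∈ span K (Set.range v) := by
  by_contra hu
  obtain ⟨ρ, hρ, hdet⟩ :=
    exists_det_submatrix_ne_zero_of_linearIndependent_col _ (hv.finCons hu)
  exact hdet (h ρ hρ)

end Matrix

/-- If the last `r` columns of `M` are linearly independent, then `M` has rank at most
`r` iff all minors with `r+1` distinct rows and columns `{t} ∪ {last r columns}`
(for `t` among the first `s` columns) vanish. -/
theorem statement8 {F : Type*} [Field F] (m s r : ℕ)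
    (M : Matrix (Fin m) (Fin s ⊕ Fin r) F)
    (hli : LinearIndependent F (fun j : Fin r => fun i => M i (Sum.inr j))) :
    M.rank ≤ r ↔
      ∀ (ρ : Fin (r + 1) → Fin m), Function.Injective ρ → ∀ t : Fin s,
        (M.submatrix ρ
          (Fin.cases (Sum.inl t) (fun k' => Sum.inr k') : Fin (r + 1) → Fin s ⊕ Fin r)).det
          = 0 := by
  constructor
  · intro hr ρ _ t
    exact M.det_submatrix_eq_zero_of_rank_lt ρ _ (by rw [Fintype.card_fin]; omega)
  · intro h
    simpa using M.rank_le_card_of_col_mem_span _ fun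
      | .inl t => mem_span_of_det_submatrix_cons_eq_zero hli fun ρ hρ => by
          convert h ρ hρ t using 2
          ext i j
          cases j using Fin.cases <;> rfl
      | .inr j => subset_span ⟨j, rfl⟩
end

section
/- In characteristic 2, with M_x = (M_x^{(1)} | M_x^{(2)}) an m×n matrix of linear forms in x and C an r×(n-r) matrix of variables, for every J ⊆ {1,...,m} with #J = r+1 and every i ∈ {1,...,n-r}, the polynomial combination (e_i ⊗ V_J(M_x^{(2)})) · vec_col(M_x·(I_{n-r}; C)) equals the minor |M_x|_{J, {i} ∪ {n-r+1,...,n}}; in particular the Minors-modeling polynomials lie in the ideal generated by the Kipnis–Shamir polynomials. -/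
open Matrix MvPolynomial

/-! Write the Kipnis–Shamir column as `v + B *ᵥ c`, where `v` is column `i` of `M_x⁽¹⁾`
restricted to the rows `J`, `B` is `M_x⁽²⁾` restricted to `J` and `c` is column `i` of `C`.
In characteristic 2 Laplace expansion along the first column carries no signs, so
`V_J ⬝ᵥ v` is the minor `|M_x|_{J, {i} ∪ last r columns}`, while `V_J ⬝ᵥ (B *ᵥ c) = 0`
because every `V_J ⬝ᵥ (column of B)` is a determinant with two equal columns. -/

namespace Matrix

variable {R : Type*} [CommRing R] {n : ℕ}

/-- `V_J` of the paper: the maximal minors of `B` obtained by deleting one row. -/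
def rowDeletedMinors (B : Matrix (Fin (n + 1)) (Fin n) R) : Fin (n + 1) → R :=
  fun k => (B.submatrix k.succAbove id).det

variable [CharP R 2]

theorem det_of_cons_eq_dotProduct_rowDeletedMinors (v : Fin (n + 1) → R)
    (B : Matrix (Fin (n + 1)) (Fin n) R) :
    (of fun k => Fin.cons (v k) (B k) : Matrix (Fin (n + 1)) (Fin (n + 1)) R).det =
      v ⬝ᵥ rowDeletedMinors B := by
  rw [det_succ_column_zero]
  refine Finset.sum_congr rfl fun k _ => ?_
  rw [CharTwo.neg_eq, one_pow, one_mul]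
  rfl

theorem rowDeletedMinors_vecMul (B : Matrix (Fin (n + 1)) (Fin n) R) :
    rowDeletedMinors B ᵥ* B = 0 := by
  ext j
  rw [vecMul, dotProduct_comm, ← det_of_cons_eq_dotProduct_rowDeletedMinors]
  exact det_zero_of_column_eq (Fin.succ_ne_zero j).symm fun k => rfl

theorem rowDeletedMinors_dotProduct_add_mulVec (v : Fin (n + 1) → R)
    (B : Matrix (Fin (n + 1)) (Fin n) R) (c : Fin n → R) :
    rowDeletedMinors B ⬝ᵥ (v + B *ᵥ c) =
      (of fun k => Fin.cons (v k) (B k) : Matrix (Fin (n + 1)) (Fin (n + 1)) R).det := by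
  rw [dotProduct_add, dotProduct_mulVec, rowDeletedMinors_vecMul, zero_dotProduct, add_zero,
    dotProduct_comm, det_of_cons_eq_dotProduct_rowDeletedMinors]

end Matrix

section KipnisShamir

variable {R : Type*} [CommRing R] {m σ : Type*} [Fintype σ] [DecidableEq σ] {r : ℕ}

theorem mul_fromRows_one_apply (M : Matrix m (σ ⊕ Fin r) R) (C : Matrix (Fin r) σ R)
    (a : m) (i : σ) :
    (M * fromRows 1 C : Matrix m σ R) a i =
      M a (Sum.inl i) + (M.toCols₂ *ᵥ fun j => C j i) a := by
  have h := fromCols_mul_fromRows M.toCols₁ M.toCols₂ (1 : Matrix σ σ R) C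
  rw [fromCols_toCols, Matrix.mul_one] at h
  exact congrFun (congrFun h a) i

theorem rowDeletedMinors_dotProduct_mul_fromRows_one [CharP R 2] (M : Matrix m (σ ⊕ Fin r) R)
    (C : Matrix (Fin r) σ R) (ρ : Fin (r + 1) → m) (i : σ) :
    rowDeletedMinors (M.toCols₂.submatrix ρ id) ⬝ᵥ
        (fun k => (M * fromRows 1 C : Matrix m σ R) (ρ k) i) =
      (M.submatrix ρ (Fin.cases (Sum.inl i) Sum.inr : Fin (r + 1) → σ ⊕ Fin r)).det := by
  have h := rowDeletedMinors_dotProduct_add_mulVec (fun k => M (ρ k) (Sum.inl i))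
    (M.toCols₂.submatrix ρ id) (fun j => C j i)
  have hM : M.submatrix ρ (Fin.cases (Sum.inl i) Sum.inr) =
      of fun k => Fin.cons (M (ρ k) (Sum.inl i)) (M.toCols₂.submatrix ρ id k) := by
    ext k j
    cases j using Fin.cases <;> rfl
  simp only [mul_fromRows_one_apply]
  rw [hM, ← h]
  rfl

end KipnisShamir

/-- In characteristic 2: the combination of the Kipnis–Shamir polynomials (the entries
of `M_x·(I_s ; C)`) with coefficients `e_i ⊗ V_J(M_x⁽²⁾)` equals the Minors-modeling
polynomial `|M_x|_{J, {i} ∪ {last r columns}}`; in particular the Minors polynomials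
lie in the ideal generated by the Kipnis–Shamir polynomials.  Here `J` of size `r+1`
is given by an injection `ρ`, and `V_J(M_x⁽²⁾)_{ρ k} = det((M_x⁽²⁾)_{J\{ρk},*})`. -/
theorem statement13 {F : Type*} [Field F] [CharP F 2] (K m s r : ℕ)
    (Mi : Fin K → Matrix (Fin m) (Fin s ⊕ Fin r) F) :
    let R := MvPolynomial (Fin K ⊕ (Fin r × Fin s)) F
    let Mx : Matrix (Fin m) (Fin s ⊕ Fin r) R :=
      Matrix.of fun a b => ∑ i, MvPolynomial.C (Mi i a b) * X (Sum.inl i)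
    let Mx2 : Matrix (Fin m) (Fin r) R := Matrix.of fun a b => Mx a (Sum.inr b)
    let Cm : Matrix (Fin r) (Fin s) R := Matrix.of fun i j => X (Sum.inr (i, j))
    let KS : Matrix (Fin m) (Fin s) R :=
      Mx * Matrix.fromRows (1 : Matrix (Fin s) (Fin s) R) Cm
    ∀ (ρ : Fin (r + 1) → Fin m), Function.Injective ρ → ∀ i : Fin s,
      (∑ k : Fin (r + 1), (Mx2.submatrix (ρ ∘ k.succAbove) id).det * KS (ρ k) i
          = (Mx.submatrix ρ
              (Fin.cases (Sum.inl i) (fun k' => Sum.inr k') :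
                Fin (r + 1) → Fin s ⊕ Fin r)).det) ∧
      (Mx.submatrix ρ
          (Fin.cases (Sum.inl i) (fun k' => Sum.inr k') :
            Fin (r + 1) → Fin s ⊕ Fin r)).det ∈
        Ideal.span {p : R | ∃ ℓ j, p = KS ℓ j} := by
  intro R Mx Mx2 Cm KS ρ _ i
  have key := rowDeletedMinors_dotProduct_mul_fromRows_one Mx Cm ρ i
  refine ⟨key, key ▸ Ideal.sum_mem _ fun k _ => Ideal.mul_mem_left _ _ ?_⟩
  exact Ideal.subset_span ⟨ρ k, i, rfl⟩
end

section
/- In characteristic 2, with M_x an m×n matrix of linear forms in x, M_x^{(1)} the submatrix of its first n-r columns, and C an r×(n-r) matrix of variables, for every J ⊆ {1,...,n-r} with #J = r+1 and every ℓ ∈ {1,...,m}, the polynomial (e_ℓ ⊗ V_J(C)) · vec_row(M_x·(I_{n-r}; C)) equals the maximal minor on the columns J of the (r+1)×(n-r) matrix obtained by stacking the ℓ-th row of M_x^{(1)} over C, i.e. it equals det( ( (M_x^{(1)})_{ℓ,*} ; C )_{*,J} ). In particular these Support Minors polynomials lie in the ideal generated by the Kipnis–Shamir polynomials. -/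
open Matrix MvPolynomial

/-- In characteristic 2: the combination of the Kipnis–Shamir polynomials (the entries
of `M_x·(I_s ; C)`) with coefficients `e_ℓ ⊗ V_J(C)` (for `J ⊆ {1..s}` of size `r+1`,
given by an injection `ρ`) equals the Support Minors polynomial
`det( ((M_x⁽¹⁾)_{ℓ,*} ; C)_{*,J} )`; in particular these Support Minors polynomials
lie in the ideal generated by the Kipnis–Shamir polynomials. -/
theorem statement14 {F : Type*} [Field F] [CharP F 2] (K m s r : ℕ)
    (Mi : Fin K → Matrix (Fin m) (Fin s ⊕ Fin r) F) :
    let R := MvPolynomial (Fin K ⊕ (Fin r × Fin s)) F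
    let Mx : Matrix (Fin m) (Fin s ⊕ Fin r) R :=
      Matrix.of fun a b => ∑ i, MvPolynomial.C (Mi i a b) * X (Sum.inl i)
    let Cm : Matrix (Fin r) (Fin s) R := Matrix.of fun i j => X (Sum.inr (i, j))
    let KS : Matrix (Fin m) (Fin s) R :=
      Mx * Matrix.fromRows (1 : Matrix (Fin s) (Fin s) R) Cm
    ∀ (ρ : Fin (r + 1) → Fin s), Function.Injective ρ → ∀ ℓ : Fin m,
      (∑ k : Fin (r + 1), (Cm.submatrix id (ρ ∘ k.succAbove)).det * KS ℓ (ρ k)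
          = (Matrix.of (fun (u k : Fin (r + 1)) =>
              (Fin.cases (Mx ℓ (Sum.inl (ρ k))) (fun u' => Cm u' (ρ k)) u : R)) :
              Matrix (Fin (r + 1)) (Fin (r + 1)) R).det) ∧
      (Matrix.of (fun (u k : Fin (r + 1)) =>
          (Fin.cases (Mx ℓ (Sum.inl (ρ k))) (fun u' => Cm u' (ρ k)) u : R)) :
          Matrix (Fin (r + 1)) (Fin (r + 1)) R).det ∈
        Ideal.span {p : R | ∃ ℓ' j, p = KS ℓ' j} := by

  intro R Mx Cm KS ρ hρ ℓ
  haveI : CharP R 2 := inferInstance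
  set A : (Fin s → R) → Matrix (Fin (r+1)) (Fin (r+1)) R := fun v =>
    Matrix.of (fun (u k : Fin (r+1)) =>
      (Fin.cases (v (ρ k)) (fun u' => Cm u' (ρ k)) u : R)) with hA
  have expand : ∀ v : Fin s → R,
      (A v).det = ∑ k : Fin (r+1), (Cm.submatrix id (ρ ∘ k.succAbove)).det * v (ρ k) := by
    intro v
    rw [Matrix.det_succ_row_zero]
    refine Finset.sum_congr rfl fun k _ => ?_
    have h1 : ((-1 : R) ^ (k : ℕ)) = 1 := by
      rw [CharTwo.neg_eq]; exact one_pow _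
    have h2 : (A v).submatrix Fin.succ k.succAbove = Cm.submatrix id (ρ ∘ k.succAbove) := by
      ext u' k'
      simp [hA, Matrix.submatrix_apply]
    rw [h1, one_mul, h2]
    have h3 : A v 0 k = v (ρ k) := by simp [hA]
    rw [h3, mul_comm]
  have hKS : ∀ j, KS ℓ j = Mx ℓ (Sum.inl j) + ∑ i, Mx ℓ (Sum.inr i) * Cm i j := by
    intro j
    simp [KS, Matrix.mul_apply, Fintype.sum_sum_type, Matrix.one_apply, mul_ite,
      mul_one, mul_zero, Finset.sum_ite_eq']
  have hdup : ∀ i : Fin r, (A (fun j => Cm i j)).det = 0 := by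
    intro i
    apply Matrix.det_zero_of_row_eq (show (0 : Fin (r+1)) ≠ i.succ from (Fin.succ_ne_zero i).symm)
    funext k
    simp [hA]
  have key : ∑ k : Fin (r + 1), (Cm.submatrix id (ρ ∘ k.succAbove)).det * KS ℓ (ρ k)
      = (A (fun j => Mx ℓ (Sum.inl j))).det := by
    rw [expand (fun j => Mx ℓ (Sum.inl j))]
    simp only [hKS, mul_add, Finset.sum_add_distrib]
    have h0 : ∑ k : Fin (r+1), (Cm.submatrix id (ρ ∘ k.succAbove)).det *
        (∑ i, Mx ℓ (Sum.inr i) * Cm i (ρ k)) = 0 := by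
      have hswap : ∀ k : Fin (r+1), (Cm.submatrix id (ρ ∘ k.succAbove)).det *
          (∑ i, Mx ℓ (Sum.inr i) * Cm i (ρ k))
          = ∑ i, Mx ℓ (Sum.inr i) * ((Cm.submatrix id (ρ ∘ k.succAbove)).det * Cm i (ρ k)) := by
        intro k; rw [Finset.mul_sum]; exact Finset.sum_congr rfl fun i _ => by ring
      simp only [hswap]
      rw [Finset.sum_comm]
      refine Finset.sum_eq_zero fun i _ => ?_
      rw [← Finset.mul_sum, ← expand (fun j => Cm i j), hdup, mul_zero]
    rw [h0, add_zero]
  exact ⟨key, by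
    rw [← key]
    refine Ideal.sum_mem _ fun k _ => Ideal.mul_mem_left _ _ ?_
    exact Ideal.subset_span ⟨ℓ, ρ k, rfl⟩⟩
end
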